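/- Let F be a field with char(F) ≠ 2, and let A₃ be the algebra on F³ with multiplication e₁·e₂ = e₂, e₁·e₃ = e₂, e₂·e₃ = e₃ (other basis products determined by anti-commutativity). Then the derivations of A₃ are exactly the scalar multiples of the linear map D₀ with D₀(e₁) = -e₁ + e₂ - e₃, D₀(e₂) = e₃, D₀(e₃) = e₃, and the automorphisms of A₃ are exactly the linear maps g_t, for nonzero t ∈ F, defined by g_t(e₁) = (1/t)e₁ + (1 - 1/t)e₂ + (1/t - 1)e₃, g_t(e₂) = e₂ + (t-1)e₃, g_t(e₃) = t e₃. -/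

import Mathlib

/-!
A linear map of `F³` is determined by its values on `e₁, e₂, e₃`. Applying the derivation
(resp. automorphism) identity to the products `e₁e₂ = e₂`, `e₁e₃ = e₂`, `e₂e₃ = e₃` gives nine
scalar equations in the nine matrix entries, and these force the stated form; for automorphisms
the `e₃`-entry `t` of `g e₃` is nonzero because `g` is injective, which lets one divide by it.
Conversely, the stated maps satisfy the identity by a polynomial computation.
-/

def mulA3 {F : Type*} [Field F] (x y : Fin 3 → F) : Fin 3 → F :=
  ![0,
    (x 0 * y 1 - x 1 * y 0) + (x 0 * y 2 - x 2 * y 0),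
    (x 1 * y 2 - x 2 * y 1)]

theorem vec3_eta {α : Type*} (v : Fin 3 → α) : v = ![v 0, v 1, v 2] := by
  ext i; fin_cases i <;> rfl

theorem LinearMap.apply_eq_fin3 {R M : Type*} [Semiring R] [AddCommMonoid M] [Module R M]
    (f : (Fin 3 → R) →ₗ[R] M) (x : Fin 3 → R) :
    f x = x 0 • f ![1, 0, 0] + x 1 • f ![0, 1, 0] + x 2 • f ![0, 0, 1] := by
  rw [f.pi_apply_eq_sum_univ x, Fin.sum_univ_three]
  congr <;> ext j <;> fin_cases j <;> rfl

section

variable {F : Type*} [Field F]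

theorem mulA3_derivation_iff (D : (Fin 3 → F) →ₗ[F] (Fin 3 → F)) :
    (∀ x y : Fin 3 → F, D (mulA3 x y) = mulA3 (D x) y + mulA3 x (D y)) ↔
      ∃ a : F,
        D ![1, 0, 0] = a • ![-1, 1, -1] ∧
        D ![0, 1, 0] = a • ![0, 0, 1] ∧
        D ![0, 0, 1] = a • ![0, 0, 1] := by
  constructor
  · intro hD
    obtain ⟨a₁, a₂, a₃, h₁⟩ : ∃ a₁ a₂ a₃, D ![1, 0, 0] = ![a₁, a₂, a₃] := ⟨_, _, _, vec3_eta _⟩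
    obtain ⟨b₁, b₂, b₃, h₂⟩ : ∃ b₁ b₂ b₃, D ![0, 1, 0] = ![b₁, b₂, b₃] := ⟨_, _, _, vec3_eta _⟩
    obtain ⟨c₁, c₂, c₃, h₃⟩ : ∃ c₁ c₂ c₃, D ![0, 0, 1] = ![c₁, c₂, c₃] := ⟨_, _, _, vec3_eta _⟩
    have h₁₂ := hD ![1, 0, 0] ![0, 1, 0]
    have h₁₃ := hD ![1, 0, 0] ![0, 0, 1]
    have h₂₃ := hD ![0, 1, 0] ![0, 0, 1]
    simp only [mulA3, Matrix.cons_val_zero, Matrix.cons_val_one, Matrix.cons_val, mul_one, mul_zero,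
      one_mul, zero_mul, sub_zero, zero_sub, sub_self, add_zero, zero_add, right_eq_add, h₁, h₂, h₃,
      Matrix.add_cons, Matrix.head_cons, Matrix.tail_cons, Matrix.empty_add_empty, Matrix.vecCons_inj,
      and_true] at h₁₂ h₁₃ h₂₃
    obtain ⟨hb₁, h₁₂₂, h₁₂₃⟩ := h₁₂
    obtain ⟨-, h₁₃₂, h₁₃₃⟩ := h₁₃
    obtain ⟨hc₁, h₂₃₂, hb₂⟩ := h₂₃
    have hb₃ : b₃ = -a₁ := by linear_combination -h₁₂₂
    refine ⟨-a₁, ?_⟩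
    simp only [h₁, h₂, h₃, Matrix.smul_cons, smul_eq_mul, mul_neg, mul_one, mul_zero, neg_neg,
      Matrix.smul_empty, Matrix.vecCons_inj, true_and, and_true]
    exact ⟨⟨by linear_combination hb₃ - h₁₃₃, by linear_combination h₁₂₃ - hb₃⟩,
      ⟨hb₁, hb₂, hb₃⟩, hc₁, by linear_combination h₂₃₂ + hb₁ - hc₁,
      by linear_combination hb₂ - h₁₃₂ - h₂₃₂ - hb₁ + hc₁⟩
  · rintro ⟨a, h₁, h₂, h₃⟩ x y
    have hD (z : Fin 3 → F) : D z = ![-a * z 0, a * z 0, a * (-z 0 + z 1 + z 2)] := by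
      rw [D.apply_eq_fin3, h₁, h₂, h₃]
      ext i; fin_cases i <;> simp <;> ring
    ext i; fin_cases i <;> simp [hD, mulA3] <;> ring

theorem mulA3_automorphism_iff (g : (Fin 3 → F) ≃ₗ[F] (Fin 3 → F)) :
    (∀ x y : Fin 3 → F, g (mulA3 x y) = mulA3 (g x) (g y)) ↔
      ∃ t : F, t ≠ 0 ∧
        g ![1, 0, 0] = ![1 / t, 1 - 1 / t, 1 / t - 1] ∧
        g ![0, 1, 0] = ![0, 1, t - 1] ∧
        g ![0, 0, 1] = t • ![0, 0, 1] := by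
  constructor
  · intro hg
    obtain ⟨a₁, a₂, a₃, h₁⟩ : ∃ a₁ a₂ a₃, g ![1, 0, 0] = ![a₁, a₂, a₃] := ⟨_, _, _, vec3_eta _⟩
    obtain ⟨b₁, b₂, b₃, h₂⟩ : ∃ b₁ b₂ b₃, g ![0, 1, 0] = ![b₁, b₂, b₃] := ⟨_, _, _, vec3_eta _⟩
    obtain ⟨c₁, c₂, t, h₃⟩ : ∃ c₁ c₂ t, g ![0, 0, 1] = ![c₁, c₂, t] := ⟨_, _, _, vec3_eta _⟩
    have h₁₂ := hg ![1, 0, 0] ![0, 1, 0]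
    have h₁₃ := hg ![1, 0, 0] ![0, 0, 1]
    have h₂₃ := hg ![0, 1, 0] ![0, 0, 1]
    simp only [mulA3, Matrix.cons_val_zero, Matrix.cons_val_one, Matrix.cons_val, mul_one, mul_zero,
      sub_zero, sub_self, add_zero, zero_add, h₁, h₂, h₃, Matrix.vecCons_inj, and_true] at h₁₂ h₁₃ h₂₃
    obtain ⟨hb₁, h₁₂₂, h₁₂₃⟩ := h₁₂
    obtain ⟨-, h₁₃₂, h₁₃₃⟩ := h₁₃
    obtain ⟨hc₁, h₂₃₂, h₂₃₃⟩ := h₂₃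
    have hc₂ : c₂ = 0 := by simpa [hb₁, hc₁] using h₂₃₂
    have ht₀ : t ≠ 0 := by
      rintro rfl
      have : g ![0, 0, 1] = g 0 := by rw [h₃, hc₁, hc₂, map_zero]; ext i; fin_cases i <;> rfl
      simpa using g.injective this
    have hb₂ : b₂ = 1 := mul_right_cancel₀ ht₀ (by linear_combination -h₂₃₃ + b₃ * hc₂)
    have ha₁ : a₁ * t = 1 := by linear_combination -h₁₃₂ + hb₂ - a₁ * hc₂ + (a₂ + a₃) * hc₁
    have ha₁b₃ : a₁ * (1 + b₃) = 1 := by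
      linear_combination -h₁₂₂ + (1 - a₁) * hb₂ + (a₂ + a₃) * hb₁
    have hb₃ : b₃ = t - 1 := by linear_combination t * ha₁b₃ - (1 + b₃) * ha₁
    have ha₂ : a₂ * t = t - 1 := by linear_combination -h₁₃₃ + hb₃ + a₃ * hc₂
    have ha₃ : a₃ * t = 1 - t := by linear_combination t * h₁₂₃ - t * a₃ * hb₂ + b₃ * ha₂ - hb₃
    refine ⟨t, ht₀, ?_, ?_, ?_⟩
    · rw [h₁]
      simp only [Matrix.vecCons_inj, and_true]
      field_simp
      exact ⟨ha₁, by linear_combination ha₂, by linear_combination ha₃⟩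
    · simp [h₂, hb₁, hb₂, hb₃]
    · simp [h₃, hc₁, hc₂]
  · rintro ⟨t, ht, h₁, h₂, h₃⟩ x y
    have hg (z : Fin 3 → F) :
        g z = ![z 0 / t, z 0 * (1 - 1 / t) + z 1, z 0 * (1 / t - 1) + z 1 * (t - 1) + z 2 * t] := by
      rw [← LinearEquiv.coe_coe, LinearMap.apply_eq_fin3]
      simp only [LinearEquiv.coe_coe, h₁, h₂, h₃]
      ext i; fin_cases i <;> simp; ring
    ext i; fin_cases i <;> simp [hg, mulA3] <;> field_simp <;> ring

end

theorem der_aut_A3_general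
    (F : Type*) [Field F] :
    (∀ D : (Fin 3 → F) →ₗ[F] (Fin 3 → F),
      (∀ x y : Fin 3 → F, D (mulA3 x y) = mulA3 (D x) y + mulA3 x (D y)) ↔
        ∃ a : F,
          D ![1, 0, 0] = a • ![-1, 1, -1] ∧
          D ![0, 1, 0] = a • ![0, 0, 1] ∧
          D ![0, 0, 1] = a • ![0, 0, 1]) ∧
    (∀ g : (Fin 3 → F) ≃ₗ[F] (Fin 3 → F),
      (∀ x y : Fin 3 → F, g (mulA3 x y) = mulA3 (g x) (g y)) ↔
        ∃ t : F, t ≠ 0 ∧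
          g ![1, 0, 0] = ![1 / t, 1 - 1 / t, 1 / t - 1] ∧
          g ![0, 1, 0] = ![0, 1, t - 1] ∧
          g ![0, 0, 1] = t • ![0, 0, 1]) :=
  ⟨mulA3_derivation_iff, mulA3_automorphism_iff⟩

theorem der_aut_A3
    (F : Type*) [Field F] (hchar : ringChar F ≠ 2) :
    (∀ D : (Fin 3 → F) →ₗ[F] (Fin 3 → F),
      (∀ x y : Fin 3 → F, D (mulA3 x y) = mulA3 (D x) y + mulA3 x (D y)) ↔
        ∃ a : F,
          D ![1, 0, 0] = a • ![-1, 1, -1] ∧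
          D ![0, 1, 0] = a • ![0, 0, 1] ∧
          D ![0, 0, 1] = a • ![0, 0, 1]) ∧
    (∀ g : (Fin 3 → F) ≃ₗ[F] (Fin 3 → F),
      (∀ x y : Fin 3 → F, g (mulA3 x y) = mulA3 (g x) (g y)) ↔
        ∃ t : F, t ≠ 0 ∧
          g ![1, 0, 0] = ![1 / t, 1 - 1 / t, 1 / t - 1] ∧
          g ![0, 1, 0] = ![0, 1, t - 1] ∧
          g ![0, 0, 1] = t • ![0, 0, 1]) :=
  der_aut_A3_general F
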